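/- arXiv:1111.4977 — 5 statements merged into one kernel-verified Lean document; each statement's English description precedes it below -/
import Mathlib

section
/- Let A be a nonempty finite set in an abelian group and let D⁺ = {d ∈ A - A : n(d) ≥ |A|²/(2|A + A|)}, where n(d) is the number of representations of d as a difference of two elements of A. Then the energy supported on D⁺ satisfies ∑_{d ∈ D⁺} n(d)² ≥ |A|⁴/(2|A + A|). -/
open Finset Pointwise

/-- Number of representations of `d` as a difference of two elements of `A`. -/
def subRep {G : Type*} [AddCommGroup G] [DecidableEq G] (A : Finset G) (d : G) : ℕ :=
  ((A ×ˢ A).filter fun p => p.1 - p.2 = d).card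

/-!
By Cauchy–Schwarz, `|A|⁴ ≤ |A + A| E(A)`, and `E(A) = ∑_d n(d)²`. The unpopular differences,
those with `n(d) < c := |A|² / (2|A + A|)`, contribute at most `c ∑_d n(d) = c |A|²`, which is
half of that lower bound for `E(A)`.
-/

open scoped Combinatorics.Additive

namespace Finset

lemma sum_card_fiberwise_sq_eq_card_filter {ι κ : Type*} [DecidableEq ι] [DecidableEq κ]
    {s : Finset ι} {t : Finset κ} {g : ι → κ} (hg : Set.MapsTo g s t) :
    ∑ j ∈ t, #{i ∈ s | g i = j} ^ 2 = #{x ∈ s ×ˢ s | g x.1 = g x.2} := by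
  rw [card_eq_sum_card_fiberwise (f := fun x => g x.1) (t := t)
    fun x hx => hg (mem_product.1 (mem_filter.1 hx).1).1]
  refine sum_congr rfl fun j _ => ?_
  rw [sq, ← card_product]
  congr 1
  ext ⟨x, y⟩
  simp only [mem_product, mem_filter]
  grind

lemma sum_sq_le_sum_filter_sq_add_mul_sum {ι R : Type*} [CommRing R] [LinearOrder R]
    [IsStrictOrderedRing R] (s : Finset ι) (f : ι → R) (hf : ∀ i ∈ s, 0 ≤ f i) {c : R}
    (hc : 0 ≤ c) :
    ∑ i ∈ s, f i ^ 2 ≤ ∑ i ∈ s with c ≤ f i, f i ^ 2 + c * ∑ i ∈ s, f i := by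
  rw [← sum_filter_add_sum_filter_not s (fun i => c ≤ f i) (fun i => f i ^ 2)]
  gcongr ∑ i ∈ s with c ≤ f i, f i ^ 2 + ?_
  calc ∑ i ∈ s with ¬c ≤ f i, f i ^ 2
      ≤ ∑ i ∈ s with ¬c ≤ f i, c * f i := sum_le_sum fun i hi => by
        obtain ⟨his, hlt⟩ := mem_filter.1 hi
        rw [sq]
        exact mul_le_mul_of_nonneg_right (not_le.1 hlt).le (hf i his)
    _ ≤ c * ∑ i ∈ s, f i := by
        rw [← mul_sum]
        exact mul_le_mul_of_nonneg_left
          (sum_le_sum_of_subset_of_nonneg (filter_subset _ _) fun i hi _ => hf i hi) hc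

end Finset

section subRep

variable {G : Type*} [AddCommGroup G] [DecidableEq G] (A : Finset G)

lemma mapsTo_sub_product : Set.MapsTo (fun p : G × G => p.1 - p.2) ↑(A ×ˢ A) ↑(A - A) :=
  fun _ hp => sub_mem_sub (mem_product.1 hp).1 (mem_product.1 hp).2

lemma sum_subRep : ∑ d ∈ A - A, subRep A d = #A ^ 2 := by
  rw [sq, ← card_product]
  exact (card_eq_sum_card_fiberwise (mapsTo_sub_product A)).symm

lemma addEnergy_eq_sum_subRep_sq : E[A] = ∑ d ∈ A - A, subRep A d ^ 2 := by
  unfold subRep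
  rw [sum_card_fiberwise_sq_eq_card_filter (mapsTo_sub_product A), addEnergy]
  -- `a₁ + b₁ = a₂ + b₂` iff `a₁ - a₂ = b₂ - b₁`
  refine card_equiv ((Equiv.refl _).prodCongr (Equiv.prodComm _ _)) fun x => ?_
  simp only [mem_filter, mem_product, Equiv.prodCongr_apply, Equiv.coe_refl,
    sub_eq_sub_iff_add_eq_add]
  grind

end subRep

theorem energy_on_popular_differences_general {G : Type*} [AddCommGroup G] [DecidableEq G]
    (A : Finset G) :
    (A.card : ℝ) ^ 4 / (2 * (A + A).card) ≤
      ∑ d ∈ (A - A).filter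
          (fun d => (A.card : ℝ) ^ 2 / (2 * (A + A).card) ≤ (subRep A d : ℝ)),
        (subRep A d : ℝ) ^ 2 := by
  have hCS : (#A : ℝ) ^ 2 * #A ^ 2 ≤ #(A + A) * ∑ d ∈ A - A, (subRep A d : ℝ) ^ 2 := by
    have := le_card_add_mul_addEnergy A A
    rw [addEnergy_eq_sum_subRep_sq] at this
    exact_mod_cast this
  have htot : ∑ d ∈ A - A, (subRep A d : ℝ) = (#A : ℝ) ^ 2 := by exact_mod_cast sum_subRep A
  set N : ℝ := (A.card : ℝ)
  set K : ℝ := ((A + A).card : ℝ)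
  set E : ℝ := ∑ d ∈ A - A, (subRep A d : ℝ) ^ 2
  have hE : N ^ 4 / K ≤ E := div_le_of_le_mul₀ (by positivity) (by positivity) (by linarith)
  have hsplit := sum_sq_le_sum_filter_sq_add_mul_sum (A - A) (fun d => (subRep A d : ℝ))
    (fun _ _ => Nat.cast_nonneg _) (c := N ^ 2 / (2 * K)) (by positivity)
  rw [htot] at hsplit
  have hunpopular : N ^ 2 / (2 * K) * N ^ 2 = N ^ 4 / (2 * K) := by ring
  have hhalf : N ^ 4 / K = 2 * (N ^ 4 / (2 * K)) := by ring
  linarith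

theorem energy_on_popular_differences {G : Type*} [AddCommGroup G] [DecidableEq G]
    (A : Finset G) (hA : A.Nonempty) :
    (A.card : ℝ) ^ 4 / (2 * (A + A).card) ≤
      ∑ d ∈ (A - A).filter
          (fun d => (A.card : ℝ) ^ 2 / (2 * (A + A).card) ≤ (subRep A d : ℝ)),
        (subRep A d : ℝ) ^ 2 :=
  energy_on_popular_differences_general A
end

section
/- Let A be a finite nonempty set in an abelian group with E₃(A) > 0, and let D' be any subset of A - A. Then ∑_{d ∈ D'} |A_d| · |A - A_d| ≥ |A|² · (∑_{d ∈ D'} |A_d|^{3/2})² / E₃(A). -/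
/-!
Counting pairs `(a, b) ∈ A × A_d` by their difference, Cauchy–Schwarz gives
`(|A| |A_d|)² ≤ |A - A_d| · E[A, -A_d]`. A quadruple counted by `E[A, -A_d]`, together with its
translate by `d`, is a sextuple counted by `E₃(A)` from which `d` can be read off, so
`∑_d E[A, -A_d] ≤ E₃(A)`. A second Cauchy–Schwarz, splitting `|A| |A_d|^{3/2}` as
`√(|A_d| |A - A_d|) · √(E[A, -A_d])`, combines the two.
-/

open Finset Pointwise

/-- Cubic energy of a finite set `A`. -/
def cubicEnergy {G : Type*} [AddCommGroup G] [DecidableEq G] (A : Finset G) : ℕ :=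
  (((A ×ˢ A) ×ˢ (A ×ˢ A) ×ˢ (A ×ˢ A)).filter fun x =>
    x.1.1 - x.1.2 = x.2.1.1 - x.2.1.2 ∧ x.2.1.1 - x.2.1.2 = x.2.2.1 - x.2.2.2).card

open scoped Combinatorics.Additive

section

variable {G : Type*} [AddCommGroup G] [DecidableEq G]

lemma card_mul_card_sq_le_card_sub_mul_addEnergy (A B : Finset G) :
    (#A * #B) ^ 2 ≤ #(A - B) * E[A, -B] := by
  simpa [mul_pow, sub_eq_add_neg] using le_card_add_mul_addEnergy A (-B)

lemma sum_addEnergy_neg_filter_le_cubicEnergy (A D : Finset G) :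
    ∑ d ∈ D, E[A, -A.filter fun a => a + d ∈ A] ≤ cubicEnergy A := by
  unfold addEnergy cubicEnergy
  rw [← card_sigma]
  refine card_le_card_of_injOn
    (fun x => ((x.2.1.1, x.2.1.2), (-x.2.2.1, -x.2.2.2), (-x.2.2.1 + x.1, -x.2.2.2 + x.1)))
    ?_ ?_
  · rintro ⟨d, ⟨a₁, a₂⟩, ⟨b₁, b₂⟩⟩ hx
    simp only [coe_sigma, Set.mem_sigma_iff, mem_coe, mem_filter, mem_product, mem_neg']
      at hx ⊢
    obtain ⟨-, ⟨⟨ha₁, ha₂⟩, ⟨hb₁, hb₁d⟩, hb₂, hb₂d⟩, hsum⟩ := hx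
    refine ⟨⟨⟨ha₁, ha₂⟩, ⟨hb₁, hb₂⟩, hb₁d, hb₂d⟩, ?_, by abel⟩
    rw [sub_eq_sub_iff_add_eq_add, ← sub_eq_zero, ← sub_eq_zero.2 hsum]
    abel
  · rintro ⟨d, ⟨a₁, a₂⟩, ⟨b₁, b₂⟩⟩ - ⟨e, ⟨c₁, c₂⟩, ⟨f₁, f₂⟩⟩ - h
    simp only [Prod.mk.injEq, neg_inj] at h
    obtain ⟨⟨rfl, rfl⟩, ⟨rfl, rfl⟩, hde, -⟩ := h
    rw [add_left_cancel hde]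

lemma rpow_three_halves_sq {x : ℝ} (hx : 0 ≤ x) : (x ^ (3 / 2 : ℝ)) ^ 2 = x ^ 3 := by
  rw [← Real.rpow_mul_natCast hx]
  norm_num

lemma card_mul_card_filter_rpow_sq_le (A : Finset G) (d : G) :
    ((#A : ℝ) * (#(A.filter fun a => a + d ∈ A) : ℝ) ^ (3 / 2 : ℝ)) ^ 2 ≤
      ((#(A.filter fun a => a + d ∈ A) : ℝ) * #(A - A.filter fun a => a + d ∈ A)) *
        (E[A, -A.filter fun a => a + d ∈ A] : ℝ) := by
  set Ad := A.filter fun a => a + d ∈ A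
  have hCS : ((#A : ℝ) * #Ad) ^ 2 ≤ #(A - Ad) * E[A, -Ad] := by
    exact_mod_cast card_mul_card_sq_le_card_sub_mul_addEnergy A Ad
  calc ((#A : ℝ) * (#Ad : ℝ) ^ (3 / 2 : ℝ)) ^ 2 = (#Ad : ℝ) * ((#A : ℝ) * #Ad) ^ 2 := by
        simp only [mul_pow]
        rw [rpow_three_halves_sq (Nat.cast_nonneg _)]
        ring
    _ ≤ (#Ad : ℝ) * (#(A - Ad) * E[A, -Ad]) := by gcongr
    _ = _ := by ring

end

theorem sum_Ad_sub_lower_bound_general {G : Type*} [AddCommGroup G] [DecidableEq G]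
    (A : Finset G)
    (D' : Finset G) :
    (A.card : ℝ) ^ 2 *
        (∑ d ∈ D', ((A.filter fun a => a + d ∈ A).card : ℝ) ^ ((3 : ℝ) / 2)) ^ 2 /
      (cubicEnergy A : ℝ) ≤
    ∑ d ∈ D', ((A.filter fun a => a + d ∈ A).card : ℝ) *
      ((A - A.filter fun a => a + d ∈ A).card : ℝ) := by
  have hE : (∑ d ∈ D', (E[A, -A.filter fun a => a + d ∈ A] : ℝ)) ≤ cubicEnergy A := by
    exact_mod_cast sum_addEnergy_neg_filter_le_cubicEnergy A D'
  refine div_le_of_le_mul₀ (Nat.cast_nonneg _) (sum_nonneg fun _ _ => by positivity) ?_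
  calc (A.card : ℝ) ^ 2 *
        (∑ d ∈ D', ((A.filter fun a => a + d ∈ A).card : ℝ) ^ ((3 : ℝ) / 2)) ^ 2
      = (∑ d ∈ D', (A.card : ℝ) *
          ((A.filter fun a => a + d ∈ A).card : ℝ) ^ ((3 : ℝ) / 2)) ^ 2 := by
        rw [← mul_sum, mul_pow]
    _ ≤ (∑ d ∈ D', ((A.filter fun a => a + d ∈ A).card : ℝ) *
          ((A - A.filter fun a => a + d ∈ A).card : ℝ)) *
        ∑ d ∈ D', (E[A, -A.filter fun a => a + d ∈ A] : ℝ) :=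
        sum_sq_le_sum_mul_sum_of_sq_le_mul _ (fun _ _ => by positivity)
          (fun _ _ => by positivity) fun d _ => card_mul_card_filter_rpow_sq_le A d
    _ ≤ _ := by gcongr

theorem sum_Ad_sub_lower_bound {G : Type*} [AddCommGroup G] [DecidableEq G]
    (A : Finset G) (hA : A.Nonempty) (hE : 0 < cubicEnergy A)
    (D' : Finset G) (hD' : D' ⊆ A - A) :
    (A.card : ℝ) ^ 2 *
        (∑ d ∈ D', ((A.filter fun a => a + d ∈ A).card : ℝ) ^ ((3 : ℝ) / 2)) ^ 2 /
      (cubicEnergy A : ℝ) ≤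
    ∑ d ∈ D', ((A.filter fun a => a + d ∈ A).card : ℝ) *
      ((A - A.filter fun a => a + d ∈ A).card : ℝ) :=
  sum_Ad_sub_lower_bound_general A D'
end

section
/- Let A be a finite nonempty set in an abelian group with E₃(A) > 0. Then E(A, A - A) ≥ c · |A|⁸ / (|A - A| · E₃(A)) for an absolute constant c > 0, where E(A, A-A) is the additive energy of A and A - A. -/
open Finset Pointwise

/-- Additive energy of two finite sets in an abelian group. -/
def energyAdd {G : Type*} [AddCommGroup G] [DecidableEq G] (A B : Finset G) : ℕ :=
  (((A ×ˢ A) ×ˢ (B ×ˢ B)).filter fun x => x.1.1 - x.1.2 = x.2.1 - x.2.2).card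

/-! Write `n(x) = diffRep A x` and `D = A - A`. The triples `(a₁, a₂, a) ∈ A³` with
`a₁ - a₂ = x` map to the pairs `(a₁ - a, a₂ - a) ∈ D²` with difference `x`, so Cauchy–Schwarz over
the fibres gives `(n(x) |A|)² ≤ n_D(x) T(x)`, where `T(x)` counts fibre collisions; the collisions,
summed over all `x`, are solutions of `a₁ - b₁ = a - b = a₂ - b₂`, so `∑ T ≤ E₃(A)`. On the popular
differences, `n(x) ≥ |A|² / (2|D|)`, which carry half of the mass `|A|²`, this improves to
`(n(x) |A|²)² ≤ n(x) n_D(x) · 2|D| T(x)`, and Cauchy–Schwarz over the popular `x` gives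
`|A|⁸ ≤ 8 |D| E₃(A) E(A, D)`. -/

section Fibres

variable {α β : Type*} [DecidableEq β] {s : Finset α} {t : Finset β} {f : α → β}

lemma sq_card_le_card_mul_sum_sq_card_fiber (h : ∀ a ∈ s, f a ∈ t) :
    #s ^ 2 ≤ #t * ∑ b ∈ t, #{a ∈ s | f a = b} ^ 2 := by
  rw [card_eq_sum_card_fiberwise h]
  exact sq_sum_le_card_mul_sum_sq

lemma sum_sq_card_fiber_eq_card_filter (h : ∀ a ∈ s, f a ∈ t) :
    ∑ b ∈ t, #{a ∈ s | f a = b} ^ 2 = #{p ∈ s ×ˢ s | f p.1 = f p.2} := by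
  rw [card_eq_sum_card_fiberwise (f := fun p => f p.1) (t := t)
    fun p hp => h _ (mem_product.1 (mem_filter.1 hp).1).1]
  refine sum_congr rfl fun b _ => ?_
  rw [sq, ← card_product]
  congr 1
  ext ⟨a, a'⟩
  simp only [mem_product, mem_filter]
  grind

end Fibres

lemma sum_le_two_mul_sum_popular {ι : Type*} (s : Finset ι) (f : ι → ℕ) :
    ∑ i ∈ s, f i ≤ 2 * ∑ i ∈ s with ∑ j ∈ s, f j ≤ 2 * #s * f i, f i := by
  rcases s.eq_empty_or_nonempty with rfl | hs
  · simp
  set S := ∑ j ∈ s, f j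
  have hunpopular : 2 * #s * ∑ i ∈ s with ¬ S ≤ 2 * #s * f i, f i ≤ #s * S := by
    rw [mul_sum]
    calc ∑ i ∈ s with ¬ S ≤ 2 * #s * f i, 2 * #s * f i
        ≤ ∑ i ∈ s with ¬ S ≤ 2 * #s * f i, S :=
          sum_le_sum fun i hi => (not_le.1 (mem_filter.1 hi).2).le
      _ ≤ #s * S := by
          rw [sum_const, smul_eq_mul]
          exact Nat.mul_le_mul_right _ (card_filter_le _ _)
  have hsplit : ∑ i ∈ s with S ≤ 2 * #s * f i, f i + ∑ i ∈ s with ¬ S ≤ 2 * #s * f i, f i = S :=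
    sum_filter_add_sum_filter_not s _ f
  refine Nat.le_of_mul_le_mul_left ?_ (card_pos.2 hs)
  nlinarith

section Differences

variable {G : Type*} [AddCommGroup G] [DecidableEq G]

def diffRep (A : Finset G) (x : G) : ℕ := #{p ∈ A ×ˢ A | p.1 - p.2 = x}

lemma sum_diffRep (A : Finset G) : ∑ x ∈ A - A, diffRep A x = #A ^ 2 := by
  rw [sq, ← card_product]
  exact (card_eq_sum_card_fiberwise fun p hp =>
    sub_mem_sub (mem_product.1 hp).1 (mem_product.1 hp).2).symm

lemma energyAdd_eq_sum_diffRep_mul (A B : Finset G) :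
    energyAdd A B = ∑ x ∈ A - A, diffRep A x * diffRep B x := by
  rw [energyAdd, card_eq_sum_card_fiberwise (f := fun q => q.1.1 - q.1.2) (t := A - A)
    fun q hq => sub_mem_sub (mem_product.1 (mem_product.1 (mem_filter.1 hq).1).1).1
      (mem_product.1 (mem_product.1 (mem_filter.1 hq).1).1).2]
  refine sum_congr rfl fun x _ => ?_
  rw [diffRep, diffRep, ← card_product]
  congr 1
  ext ⟨⟨a₁, a₂⟩, b₁, b₂⟩
  simp only [mem_product, mem_filter]
  grind

def shiftPair (q : (G × G) × G) : G × G := (q.1.1 - q.2, q.1.2 - q.2)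

/-- `shiftCount A (d₁, d₂) = #(A ∩ (A - d₁) ∩ (A - d₂))`. -/
def shiftCount (A : Finset G) (d : G × G) : ℕ := #{q ∈ (A ×ˢ A) ×ˢ A | shiftPair q = d}

lemma sq_diffRep_mul_card_le (A : Finset G) (x : G) :
    (diffRep A x * #A) ^ 2 ≤
      diffRep (A - A) x * ∑ d ∈ (A - A) ×ˢ (A - A) with d.1 - d.2 = x, shiftCount A d ^ 2 := by
  have hcard : diffRep A x * #A = #{q ∈ (A ×ˢ A) ×ˢ A | q.1.1 - q.1.2 = x} := by
    rw [diffRep, ← card_product, filter_product_left fun p : G × G => p.1 - p.2 = x]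
  have hmaps : ∀ q ∈ ({q ∈ (A ×ˢ A) ×ˢ A | q.1.1 - q.1.2 = x} : Finset _),
      shiftPair q ∈ ({d ∈ (A - A) ×ˢ (A - A) | d.1 - d.2 = x} : Finset _) := by
    rintro ⟨⟨a₁, a₂⟩, a⟩ hq
    simp only [mem_filter, mem_product, shiftPair] at hq ⊢
    exact ⟨⟨sub_mem_sub hq.1.1.1 hq.1.2, sub_mem_sub hq.1.1.2 hq.1.2⟩, by rw [← hq.2]; abel⟩
  calc (diffRep A x * #A) ^ 2
      ≤ diffRep (A - A) x * ∑ d ∈ (A - A) ×ˢ (A - A) with d.1 - d.2 = x,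
          #{q ∈ {q ∈ (A ×ˢ A) ×ˢ A | q.1.1 - q.1.2 = x} | shiftPair q = d} ^ 2 :=
        hcard ▸ sq_card_le_card_mul_sum_sq_card_fiber hmaps
    _ ≤ _ := by
        gcongr with d
        exact card_le_card (filter_subset_filter _ (filter_subset _ _))

lemma sum_sq_shiftCount_le_cubicEnergy (A : Finset G) :
    ∑ d ∈ (A - A) ×ˢ (A - A), shiftCount A d ^ 2 ≤ cubicEnergy A := by
  have hmaps : ∀ q ∈ (A ×ˢ A) ×ˢ A, shiftPair q ∈ (A - A) ×ˢ (A - A) := by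
    rintro ⟨⟨a₁, a₂⟩, a⟩ hq
    simp only [mem_product, shiftPair] at hq ⊢
    exact ⟨sub_mem_sub hq.1.1 hq.2, sub_mem_sub hq.1.2 hq.2⟩
  simp only [shiftCount]
  rw [sum_sq_card_fiber_eq_card_filter hmaps, cubicEnergy]
  -- a collision `a₁ - a = b₁ - b`, `a₂ - a = b₂ - b` is a solution of `a₁ - b₁ = a - b = a₂ - b₂`
  refine card_le_card_of_injOn
    (fun p => ((p.1.1.1, p.2.1.1), (p.1.2, p.2.2), (p.1.1.2, p.2.1.2))) ?_ ?_
  · rintro ⟨⟨⟨a₁, a₂⟩, a⟩, ⟨b₁, b₂⟩, b⟩ hp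
    simp only [mem_coe, mem_filter, mem_product, shiftPair, Prod.mk.injEq] at hp ⊢
    obtain ⟨⟨⟨⟨ha₁, ha₂⟩, ha⟩, ⟨hb₁, hb₂⟩, hb⟩, h₁, h₂⟩ := hp
    exact ⟨⟨⟨ha₁, hb₁⟩, ⟨ha, hb⟩, ha₂, hb₂⟩, sub_eq_sub_iff_sub_eq_sub.2 h₁,
      (sub_eq_sub_iff_sub_eq_sub.2 h₂).symm⟩
  · rintro ⟨⟨⟨a₁, a₂⟩, a⟩, ⟨b₁, b₂⟩, b⟩ - ⟨⟨⟨a₁', a₂'⟩, a'⟩, ⟨b₁', b₂'⟩, b'⟩ - h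
    simp only [Prod.mk.injEq] at h ⊢
    tauto

lemma sum_sum_sq_shiftCount_le_cubicEnergy (A s : Finset G) :
    ∑ x ∈ s, ∑ d ∈ (A - A) ×ˢ (A - A) with d.1 - d.2 = x, shiftCount A d ^ 2 ≤ cubicEnergy A := by
  rw [sum_fiberwise_eq_sum_filter]
  exact (sum_le_sum_of_subset (filter_subset _ _)).trans (sum_sq_shiftCount_le_cubicEnergy A)

theorem card_pow_eight_le (A : Finset G) :
    #A ^ 8 ≤ 8 * #(A - A) * cubicEnergy A * energyAdd A (A - A) := by
  set P := {x ∈ A - A | #A ^ 2 ≤ 2 * #(A - A) * diffRep A x}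
  set T := fun x => ∑ d ∈ (A - A) ×ˢ (A - A) with d.1 - d.2 = x, shiftCount A d ^ 2
  have hpopular : #A ^ 2 ≤ 2 * ∑ x ∈ P, diffRep A x := by
    simpa only [sum_diffRep] using sum_le_two_mul_sum_popular (A - A) (diffRep A)
  have hpointwise : ∀ x ∈ P, (diffRep A x * #A ^ 2) ^ 2 ≤
      (diffRep A x * diffRep (A - A) x) * (2 * #(A - A) * T x) := by
    intro x hx
    calc (diffRep A x * #A ^ 2) ^ 2 = (diffRep A x * #A) ^ 2 * #A ^ 2 := by ring
      _ ≤ (diffRep (A - A) x * T x) * (2 * #(A - A) * diffRep A x) :=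
          Nat.mul_le_mul (sq_diffRep_mul_card_le A x) (mem_filter.1 hx).2
      _ = _ := by ring
  have henergy : ∑ x ∈ P, diffRep A x * diffRep (A - A) x ≤ energyAdd A (A - A) :=
    energyAdd_eq_sum_diffRep_mul A (A - A) ▸ sum_le_sum_of_subset (filter_subset _ _)
  have hcubic : ∑ x ∈ P, 2 * #(A - A) * T x ≤ 2 * #(A - A) * cubicEnergy A := by
    rw [← mul_sum]
    exact Nat.mul_le_mul_left _ (sum_sum_sq_shiftCount_le_cubicEnergy A P)
  calc #A ^ 8 = (#A ^ 2 * #A ^ 2) ^ 2 := by ring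
    _ ≤ (2 * (∑ x ∈ P, diffRep A x) * #A ^ 2) ^ 2 := by gcongr
    _ = 4 * (∑ x ∈ P, diffRep A x * #A ^ 2) ^ 2 := by rw [← sum_mul]; ring
    _ ≤ 4 * ((∑ x ∈ P, diffRep A x * diffRep (A - A) x) * ∑ x ∈ P, 2 * #(A - A) * T x) := by
        gcongr
        exact sum_sq_le_sum_mul_sum_of_sq_le_mul P (fun _ _ => Nat.zero_le _)
          (fun _ _ => Nat.zero_le _) hpointwise
    _ ≤ 4 * (energyAdd A (A - A) * (2 * #(A - A) * cubicEnergy A)) := by gcongr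
    _ = 8 * #(A - A) * cubicEnergy A * energyAdd A (A - A) := by ring

end Differences

theorem energy_with_difference_set_lower :
    ∃ c : ℝ, 0 < c ∧
      ∀ (G : Type) (_ : AddCommGroup G) (_ : DecidableEq G) (A : Finset G),
        A.Nonempty → 0 < cubicEnergy A →
        c * (A.card : ℝ) ^ 8 / (((A - A).card : ℝ) * (cubicEnergy A : ℝ)) ≤
          (energyAdd A (A - A) : ℝ) := by
  refine ⟨1 / 8, by norm_num, fun G _ _ A _ _ => ?_⟩
  refine div_le_of_le_mul₀ (by positivity) (by positivity) ?_
  have h : ((#A ^ 8 : ℕ) : ℝ) ≤ ((8 * #(A - A) * cubicEnergy A * energyAdd A (A - A) : ℕ) : ℝ) :=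
    Nat.cast_le.2 (card_pow_eight_le A)
  push_cast at h
  linarith
end

section
/- Let A be a finite set of nonzero reals. For t ≥ 1, let R_t = {r ∈ A:A : r has at least t representations as a/b with a,b ∈ A}. Assuming the Szemerédi–Trotter theorem, |R_t| ≤ C·|A - A|²|A|/t³ for an absolute constant C. -/
open Finset Pointwise

/-- A line in the real plane, as a set of points. -/
def IsLine (l : Set (ℝ × ℝ)) : Prop :=
  ∃ a b c : ℝ, (a, b) ≠ (0, 0) ∧ l = {p : ℝ × ℝ | a * p.1 + b * p.2 = c}

open scoped Classical in
/-- The number of incidences between a finite point set and a finite set of lines. -/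
noncomputable def incidences (P : Finset (ℝ × ℝ)) (L : Finset (Set (ℝ × ℝ))) : ℕ :=
  ((P ×ˢ L).filter fun x => x.1 ∈ x.2).card

/-- Number of representations of the ratio `r` as `a / b` with `a, b ∈ A`,
i.e. the number of pairs `(a, b) ∈ A × A` with `a = r * b`. -/
noncomputable def ratioRep (A : Finset ℝ) (r : ℝ) : ℕ :=
  ((A ×ˢ A).filter fun p => p.1 = r * p.2).card


/-! For `r ∈ R_t` and `c ∈ A`, consider the line `x = r y - c`. Each representation
`a = r b` puts the point `(a - c, b) ∈ (A - A) × A` on it, so the `|R_t| |A|` lines and the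
`|A - A| |A|` points span at least `t |R_t| |A|` incidences. Szemerédi–Trotter bounds these by
`C₀ ((|A - A| |A|² |R_t|)^{2/3} + |A - A| |A| + |R_t| |A|)`; comparing `t |R_t| |A|` with the
largest of the three terms gives the bound, the trivial estimates `t ≤ |A| ≤ |A - A|` and
`|R_t| ≤ |A|²` controlling the two linear terms. -/

def ratioLine (r c : ℝ) : Set (ℝ × ℝ) := {p | p.1 = r * p.2 - c}

lemma isLine_ratioLine (r c : ℝ) : IsLine (ratioLine r c) := by
  refine ⟨1, -r, -c, by simp, ?_⟩
  ext p
  simp only [ratioLine, Set.mem_ofPred_eq]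
  constructor <;> intro h <;> linarith

lemma ratioLine_inj {r c r' c' : ℝ} : ratioLine r c = ratioLine r' c' ↔ r = r' ∧ c = c' := by
  refine ⟨fun h => ?_, fun ⟨hr, hc⟩ => hr ▸ hc ▸ rfl⟩
  have h₀ : ((-c, 0) : ℝ × ℝ) ∈ ratioLine r' c' := h ▸ by simp [ratioLine]
  have h₁ : ((r - c, 1) : ℝ × ℝ) ∈ ratioLine r' c' := h ▸ by simp [ratioLine]
  simp only [ratioLine, Set.mem_ofPred_eq] at h₀ h₁
  constructor <;> linarith

lemma ratioLine_injective : Function.Injective fun rc : ℝ × ℝ => ratioLine rc.1 rc.2 :=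
  fun _ _ h => Prod.ext_iff.mpr (ratioLine_inj.mp h)

lemma ratioRep_le_card (A : Finset ℝ) (r : ℝ) : ratioRep A r ≤ #A :=
  card_le_card_of_injOn Prod.snd (fun p hp => (mem_product.mp (mem_filter.mp hp).1).2)
    fun p hp q hq hpq => by
      rw [mem_coe, mem_filter] at hp hq
      exact Prod.ext (by rw [hp.2, hq.2, hpq]) hpq

section Incidences

variable (A R : Finset ℝ)

noncomputable def ratioLines : Finset (Set (ℝ × ℝ)) :=
  (R ×ˢ A).image fun rc => ratioLine rc.1 rc.2

variable {A R} in
lemma isLine_of_mem_ratioLines {l : Set (ℝ × ℝ)} (hl : l ∈ ratioLines A R) : IsLine l := by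
  obtain ⟨rc, -, rfl⟩ := mem_image.mp hl
  exact isLine_ratioLine _ _

lemma card_ratioLines : #(ratioLines A R) = #R * #A := by
  rw [ratioLines, card_image_of_injective _ ratioLine_injective, card_product]

lemma card_mul_sum_ratioRep_le_incidences :
    #A * ∑ r ∈ R, ratioRep A r ≤ incidences ((A - A) ×ˢ A) (ratioLines A R) := by
  classical
  set S := (R ×ˢ A).sigma fun rc => (A ×ˢ A).filter fun p => p.1 = rc.1 * p.2
  have hS : #S = #A * ∑ r ∈ R, ratioRep A r := by
    rw [card_sigma, sum_product, mul_sum]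
    simp only [sum_const, smul_eq_mul, ratioRep]
  rw [← hS, incidences]
  refine card_le_card_of_injOn (fun x => ((x.2.1 - x.1.2, x.2.2), ratioLine x.1.1 x.1.2)) ?_ ?_
  · rintro ⟨⟨r, c⟩, ⟨a, b⟩⟩ hx
    simp only [S, coe_sigma, Set.mem_sigma_iff, mem_coe, mem_product, mem_filter] at hx
    obtain ⟨⟨hr, hc⟩, ⟨ha, hb⟩, rfl⟩ := hx
    simp only [mem_coe, mem_filter, mem_product, ratioLines, mem_image]
    refine ⟨⟨⟨sub_mem_sub ha hc, hb⟩, ⟨(r, c), ⟨hr, hc⟩, rfl⟩⟩, ?_⟩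
    simp [ratioLine]
  · rintro ⟨⟨r, c⟩, ⟨a, b⟩⟩ - ⟨⟨r', c'⟩, ⟨a', b'⟩⟩ - h
    simp only [Prod.mk.injEq] at h
    obtain ⟨⟨hac, rfl⟩, hl⟩ := h
    obtain ⟨rfl, rfl⟩ := ratioLine_inj.mp hl
    obtain rfl : a = a' := by linarith
    rfl

end Incidences

lemma le_three_mul_of_le_mul_add {K x u v w : ℝ} (h : x ≤ K * (u + v + w)) :
    x ≤ 3 * K * u ∨ x ≤ 3 * K * v ∨ x ≤ 3 * K * w := by
  by_contra! hx
  linarith [hx.1, hx.2.1, hx.2.2]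

lemma mul_cube_le_of_le_mul_rpow {K t N a D : ℝ} (ht : 0 ≤ t) (hN : 0 < N)
    (ha : 0 < a) (hD : 0 ≤ D) (h : t * (N * a) ≤ K * (D * a * (N * a)) ^ ((2 : ℝ) / 3)) :
    N * t ^ 3 ≤ K ^ 3 * (D ^ 2 * a) := by
  have hcube : (t * (N * a)) ^ 3 ≤ K ^ 3 * (D * a * (N * a)) ^ 2 := by
    calc (t * (N * a)) ^ 3 ≤ (K * (D * a * (N * a)) ^ ((2 : ℝ) / 3)) ^ 3 := by gcongr
      _ = K ^ 3 * (D * a * (N * a)) ^ 2 := by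
        rw [mul_pow, ← Real.rpow_mul_natCast (by positivity)]
        norm_num
  rw [← mul_le_mul_iff_of_pos_right (by positivity : 0 < N ^ 2 * a ^ 3)]
  linear_combination hcube

lemma rich_bound_of_incidence_bound {C₀ t N a D : ℝ} (hC₀ : 0 < C₀) (ht : 0 < t)
    (hN : 0 < N) (ha : 1 ≤ a) (haD : a ≤ D) (hta : t ≤ a) (hNa : N ≤ a ^ 2)
    (hinc : t * (N * a) ≤ C₀ * ((D * a * (N * a)) ^ ((2 : ℝ) / 3) + D * a + N * a)) :
    N * t ^ 3 ≤ ((3 * C₀) ^ 3 + 3 * C₀) * (D ^ 2 * a) := by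
  have hK : 0 ≤ 3 * C₀ := by positivity
  have hD : 0 ≤ D := by linarith
  have hD2a : 0 ≤ D ^ 2 * a := by positivity
  rcases le_three_mul_of_le_mul_add hinc with h | h | h
  · have := mul_cube_le_of_le_mul_rpow ht.le hN (by linarith) (by linarith) h
    nlinarith
  · have hNt : N * t ≤ 3 * C₀ * D := by
      rw [← mul_le_mul_iff_of_pos_right (by linarith : 0 < a)]
      linarith
    calc N * t ^ 3 = N * t * t ^ 2 := by ring
      _ ≤ 3 * C₀ * D * a ^ 2 := by gcongr
      _ ≤ 3 * C₀ * D * (D * a) := by gcongr; rw [sq]; gcongr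
      _ ≤ _ := by nlinarith [pow_nonneg hK 3]
  · have htK : t ≤ 3 * C₀ := le_of_mul_le_mul_right h (by positivity)
    calc N * t ^ 3 ≤ a ^ 2 * (3 * C₀) ^ 3 := by gcongr
      _ ≤ D ^ 2 * a * (3 * C₀) ^ 3 := by gcongr; nlinarith
      _ ≤ _ := by nlinarith

theorem rich_ratios_bound (C₀ : ℝ) (hC₀ : 0 < C₀)
    (hST : ∀ (P : Finset (ℝ × ℝ)) (L : Finset (Set (ℝ × ℝ))),
      (∀ l ∈ L, IsLine l) →
      (incidences P L : ℝ) ≤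
        C₀ * (((P.card : ℝ) * L.card) ^ ((2 : ℝ) / 3) + P.card + L.card)) :
    ∃ C : ℝ, 0 < C ∧
      ∀ (A : Finset ℝ), (0 : ℝ) ∉ A →
      ∀ t : ℝ, 1 ≤ t →
        (((A / A).filter fun r => t ≤ (ratioRep A r : ℝ)).card : ℝ) ≤
          C * ((A - A).card : ℝ) ^ 2 * (A.card : ℝ) / t ^ 3 := by
  refine ⟨(3 * C₀) ^ 3 + 3 * C₀, by positivity, fun A _ t ht => ?_⟩
  set R := (A / A).filter fun r => t ≤ (ratioRep A r : ℝ)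
  rw [le_div_iff₀ (by positivity)]
  obtain hR | ⟨r, hr⟩ := R.eq_empty_or_nonempty
  · simp only [hR, card_empty, Nat.cast_zero, zero_mul]
    positivity
  obtain ⟨hrA, htr⟩ := mem_filter.mp hr
  have hA : (1 : ℝ) ≤ #A := by exact_mod_cast (Nonempty.of_div_left ⟨r, hrA⟩).card_pos
  have hta : t ≤ #A := htr.trans (mod_cast ratioRep_le_card A r)
  have hRA : (#R : ℝ) ≤ #A ^ 2 := by
    rw [sq]; exact_mod_cast (card_filter_le _ _).trans card_div_le
  have hAD : (#A : ℝ) ≤ #(A - A) := mod_cast card_le_card_sub_self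
  have hinc : t * (#R * #A) ≤
      C₀ * ((#(A - A) * #A * (#R * #A)) ^ ((2 : ℝ) / 3) + #(A - A) * #A + #R * #A) := by
    calc t * (#R * #A) = #A * (#R • t) := by rw [nsmul_eq_mul]; ring
      _ ≤ #A * ∑ r ∈ R, (ratioRep A r : ℝ) := by
          gcongr
          exact card_nsmul_le_sum _ _ _ fun r hr => (mem_filter.mp hr).2
      _ ≤ incidences ((A - A) ×ˢ A) (ratioLines A R) := by
          exact_mod_cast card_mul_sum_ratioRep_le_incidences A R
      _ ≤ _ := hST _ _ fun l hl => isLine_of_mem_ratioLines hl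
      _ = _ := by rw [card_product, card_ratioLines]; push_cast; rfl
  calc (#R : ℝ) * t ^ 3 ≤ ((3 * C₀) ^ 3 + 3 * C₀) * (#(A - A) ^ 2 * #A) :=
        rich_bound_of_incidence_bound hC₀ (by linarith) (mod_cast card_pos.mpr ⟨r, hr⟩)
          hA hAD hta hRA hinc
    _ = _ := by ring
end

section
/- Let A be a finite set of nonzero reals. Assuming the Szemerédi–Trotter theorem, the multiplicative energy supported on the set R_t of ratios with at least t ≥ 1 representations satisfies ∑_{r ∈ A:A, n(r) ≥ t} n(r)² ≤ C·|A - A|²|A|/t for an absolute constant C. -/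
open Finset Pointwise

/-!
Split the ratios with `n(r) ≥ t` dyadically into the layers `2ᵏt ≤ n(r) < 2ᵏ⁺¹t`. By the
Szemerédi–Trotter bound the `k`-th layer has at most `K / (2ᵏt)³` elements, each contributing
at most `(2ᵏ⁺¹t)²`, so it contributes at most `4K / (2ᵏt)`; summing the geometric series gives
`8K / t`. Formally this is an induction on the number of layers, doubling the threshold.
-/

section DyadicSum

variable {ι : Type*} (S : Finset ι) (f : ι → ℝ)

theorem sum_sq_filter_lt_two_mul_le {t : ℝ} (ht : 0 ≤ t) :
    ∑ x ∈ S with t ≤ f x ∧ f x < 2 * t, f x ^ 2 ≤ #{x ∈ S | t ≤ f x} * (2 * t) ^ 2 :=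
  calc ∑ x ∈ S with t ≤ f x ∧ f x < 2 * t, f x ^ 2
      ≤ ∑ x ∈ S with t ≤ f x ∧ f x < 2 * t, (2 * t) ^ 2 := by
        refine sum_le_sum fun x hx => ?_
        obtain ⟨hlo, hhi⟩ := (mem_filter.mp hx).2
        exact pow_le_pow_left₀ (ht.trans hlo) hhi.le 2
    _ = #{x ∈ S | t ≤ f x ∧ f x < 2 * t} * (2 * t) ^ 2 := by rw [sum_const, nsmul_eq_mul]
    _ ≤ #{x ∈ S | t ≤ f x} * (2 * t) ^ 2 := by
        gcongr
        exact And.left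

theorem sum_filter_le_eq_sum_filter_two_mul_le_add {M : Type*} [AddCommMonoid M] (g : ι → M)
    {t : ℝ} (ht : 0 ≤ t) :
    ∑ x ∈ S with t ≤ f x, g x =
      ∑ x ∈ S with 2 * t ≤ f x, g x + ∑ x ∈ S with t ≤ f x ∧ f x < 2 * t, g x := by
  rw [← sum_filter_add_sum_filter_not _ (fun x => 2 * t ≤ f x), filter_filter, filter_filter]
  congr 2
  · exact filter_congr fun x _ => ⟨And.right, fun h => ⟨by linarith, h⟩⟩
  · simp only [not_le]

theorem sum_sq_filter_le_of_lt_two_pow_mul {K t : ℝ} (N : ℕ) (ht : 0 < t)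
    (hbound : ∀ x ∈ S, f x < 2 ^ N * t)
    (hcount : ∀ s, t ≤ s → (#{x ∈ S | s ≤ f x} : ℝ) ≤ K / s ^ 3) :
    ∑ x ∈ S with t ≤ f x, f x ^ 2 ≤ 8 * K / t := by
  induction N generalizing t with
  | zero =>
    have hK : 0 ≤ K := by
      simpa using (le_div_iff₀ (pow_pos ht 3)).mp ((Nat.cast_nonneg _).trans (hcount t le_rfl))
    have hempty : {x ∈ S | t ≤ f x} = ∅ :=
      filter_false_of_mem fun x hx => by simpa using hbound x hx
    rw [hempty, sum_empty]
    positivity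
  | succ N ih =>
    have hupper : ∑ x ∈ S with 2 * t ≤ f x, f x ^ 2 ≤ 4 * K / t := by
      calc _ ≤ 8 * K / (2 * t) :=
            ih (by positivity) (fun x hx => (hbound x hx).trans_eq (by ring))
              fun s hs => hcount s (by linarith)
        _ = 4 * K / t := by field_simp; ring
    have hlayer : ∑ x ∈ S with t ≤ f x ∧ f x < 2 * t, f x ^ 2 ≤ 4 * K / t :=
      calc _ ≤ #{x ∈ S | t ≤ f x} * (2 * t) ^ 2 := sum_sq_filter_lt_two_mul_le S f ht.le
        _ ≤ K / t ^ 3 * (2 * t) ^ 2 := by gcongr; exact hcount t le_rfl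
        _ = 4 * K / t := by field_simp; ring
    rw [sum_filter_le_eq_sum_filter_two_mul_le_add S f _ ht.le]
    linarith [show 8 * K / t = 4 * K / t + 4 * K / t by ring]

theorem sum_sq_filter_le_of_card_filter_le {K t : ℝ} (ht : 0 < t)
    (hcount : ∀ s, t ≤ s → (#{x ∈ S | s ≤ f x} : ℝ) ≤ K / s ^ 3) :
    ∑ x ∈ S with t ≤ f x, f x ^ 2 ≤ 8 * K / t := by
  set B := ∑ x ∈ S, |f x|
  obtain ⟨N, hN⟩ := pow_unbounded_of_one_lt (B / t) one_lt_two
  refine sum_sq_filter_le_of_lt_two_pow_mul S f N ht (fun x hx => ?_) hcount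
  calc f x ≤ B := (le_abs_self _).trans (single_le_sum (fun y _ => abs_nonneg (f y)) hx)
    _ < 2 ^ N * t := (div_lt_iff₀ ht).mp hN

end DyadicSum

theorem energy_on_rich_ratios (C₀ : ℝ) (hC₀ : 0 < C₀) :
    ∃ C : ℝ, 0 < C ∧
      ∀ (A : Finset ℝ), (0 : ℝ) ∉ A →
      (∀ s : ℝ, 1 ≤ s →
        (((A / A).filter fun r => s ≤ (ratioRep A r : ℝ)).card : ℝ) ≤
          C₀ * ((A - A).card : ℝ) ^ 2 * (A.card : ℝ) / s ^ 3) →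
      ∀ t : ℝ, 1 ≤ t →
        ∑ r ∈ (A / A).filter fun r => t ≤ (ratioRep A r : ℝ), (ratioRep A r : ℝ) ^ 2 ≤
          C * ((A - A).card : ℝ) ^ 2 * (A.card : ℝ) / t := by
  refine ⟨8 * C₀, by positivity, fun A _ hST t ht => ?_⟩
  calc _ ≤ 8 * (C₀ * ((A - A).card : ℝ) ^ 2 * (A.card : ℝ)) / t :=
        sum_sq_filter_le_of_card_filter_le (A / A) (fun r => (ratioRep A r : ℝ))
          (by positivity) fun s hs => hST s (ht.trans hs)
    _ = 8 * C₀ * ((A - A).card : ℝ) ^ 2 * (A.card : ℝ) / t := by ring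
end
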